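/- arXiv:gr-qc/0609074 — 5 statements merged into one kernel-verified Lean document; each statement's English description precedes it below -/
import Mathlib

section
/- Monotonicity principle: let S ⊆ ℝⁿ be open, f: S → ℝⁿ continuous, and x: [0,∞) → S a C¹ solution of dx/dt = f(x(t)). Let Z: S → ℝ be C¹ with ∇Z(y)·f(y) > 0 for every y ∈ S. Then every point s̄ of the ω-limit set of the curve x (i.e., every s̄ such that x(tₙ) → s̄ for some sequence tₙ → ∞) satisfies: (i) s̄ ∈ ∂S (s̄ ∉ S); (ii) limsup_{y→s̄, y∈S} Z(y) > inf_S Z; and (iii) at least one of the following holds: limsup_{y→s̄, y∈S} Z(y) = sup_S Z, or liminf_{y→s̄, y∈S} (∇Z·f)(y) = 0, or limsup_{y→s̄, y∈S} |f(y)| = ∞. -/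
/-!
Along the orbit, `t ↦ Z (x t)` is strictly increasing. Suppose that near an ω-limit point `p`
the vector field is bounded by `M`, the derivative of `Z` along it is at least `c > 0` and `Z`
is bounded above. Then `Z ∘ x` is bounded, so it eventually comes within `c τ` of its supremum;
but each return of the orbit to the `δ/2`-ball around `p` is followed by a stretch of length
`τ`, with `M τ < δ/2`, spent inside the `δ`-ball, during which `Z` gains at least `c τ`. This
contradiction rules out such bounds: if `p ∈ S` they would follow from continuity, and otherwise
their failure is exactly alternative (iii).
-/

open Filter Set Topology

variable {E : Type*} [NormedAddCommGroup E] [NormedSpace ℝ E]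

theorem dist_lt_of_norm_deriv_lt_on_ball {x v : ℝ → E} {p : E} {a b δ M : ℝ}
    (hx : ∀ t ∈ Icc a b, HasDerivAt x (v t) t)
    (hv : ∀ t ∈ Icc a b, dist (x t) p < δ → ‖v t‖ < M) (hM : 0 ≤ M)
    (hab : dist (x a) p + M * (b - a) < δ) :
    ∀ t ∈ Icc a b, dist (x t) p < δ := by
  have hfence : ∀ t ∈ Icc a b, ‖x t - p‖ ≤ dist (x a) p + M * (t - a) := by
    refine image_norm_le_of_norm_deriv_right_lt_deriv_boundary' (f := fun t => x t - p) (f' := v)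
      (B' := fun _ => M)
      (fun t ht => ((hx t ht).continuousAt.sub continuousAt_const).continuousWithinAt)
      (fun t ht => ((hx t (Ico_subset_Icc_self ht)).sub_const p).hasDerivWithinAt)
      (by rw [dist_eq_norm, sub_self, mul_zero, add_zero]) (by fun_prop)
      (fun t _ => ((hasDerivAt_id t).sub_const a |>.const_mul M |>.const_add _
        |>.hasDerivWithinAt).congr_deriv (by ring)) ?_
    intro t ht heq
    refine hv t (Ico_subset_Icc_self ht) ?_
    rw [dist_eq_norm, heq]
    nlinarith [ht.2]
  intro t ht
  calc dist (x t) p ≤ dist (x a) p + M * (t - a) := by rw [dist_eq_norm]; exact hfence t ht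
    _ ≤ dist (x a) p + M * (b - a) := by gcongr; exact ht.2
    _ < δ := hab

theorem Filter.exists_eventually_lt_of_limsup_coe_lt_top {α : Type*} {l : Filter α} {u : α → ℝ}
    (h : limsup (fun a => (u a : EReal)) l < ⊤) : ∃ K : ℝ, ∀ᶠ a in l, u a < K := by
  obtain ⟨K, hK, -⟩ := EReal.lt_iff_exists_real_btwn.mp h
  exact ⟨K, (eventually_lt_of_limsup_lt hK).mono fun _ => EReal.coe_lt_coe_iff.mp⟩

theorem Filter.exists_eventually_lt_of_coe_lt_liminf {α : Type*} {l : Filter α} {u : α → ℝ}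
    {b : ℝ} (h : (b : EReal) < liminf (fun a => (u a : EReal)) l) :
    ∃ c : ℝ, b < c ∧ ∀ᶠ a in l, c < u a := by
  obtain ⟨c, hbc, hc⟩ := EReal.lt_iff_exists_real_btwn.mp h
  exact ⟨c, EReal.coe_lt_coe_iff.mp hbc,
    (eventually_lt_of_lt_liminf hc).mono fun _ => EReal.coe_lt_coe_iff.mp⟩

section Orbit

variable {S : Set E} {f : E → E} {Z : E → ℝ} {Z' : E → E →L[ℝ] ℝ} {x : ℝ → E}

theorem hasDerivAt_comp_orbit (hZ : ∀ y ∈ S, HasFDerivAt Z (Z' y) y)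
    (hxS : ∀ t, 0 ≤ t → x t ∈ S) (hx : ∀ t, 0 ≤ t → HasDerivAt x (f (x t)) t)
    {t : ℝ} (ht : 0 ≤ t) : HasDerivAt (fun t => Z (x t)) (Z' (x t) (f (x t))) t :=
  (hZ (x t) (hxS t ht)).comp_hasDerivAt t (hx t ht)

theorem strictMonoOn_comp_orbit (hZ : ∀ y ∈ S, HasFDerivAt Z (Z' y) y)
    (hpos : ∀ y ∈ S, 0 < Z' y (f y))
    (hxS : ∀ t, 0 ≤ t → x t ∈ S) (hx : ∀ t, 0 ≤ t → HasDerivAt x (f (x t)) t) :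
    StrictMonoOn (fun t => Z (x t)) (Ici 0) := by
  refine strictMonoOn_of_deriv_pos (convex_Ici 0)
    (fun t ht => (hasDerivAt_comp_orbit hZ hxS hx ht).continuousAt.continuousWithinAt) ?_
  intro t ht
  rw [interior_Ici] at ht
  rw [(hasDerivAt_comp_orbit hZ hxS hx ht.le).deriv]
  exact hpos _ (hxS t ht.le)

theorem mul_sub_le_comp_orbit_sub (hZ : ∀ y ∈ S, HasFDerivAt Z (Z' y) y)
    (hxS : ∀ t, 0 ≤ t → x t ∈ S) (hx : ∀ t, 0 ≤ t → HasDerivAt x (f (x t)) t)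
    {a b c : ℝ} (ha : 0 ≤ a) (hab : a ≤ b) (hc : ∀ t ∈ Icc a b, c ≤ Z' (x t) (f (x t))) :
    c * (b - a) ≤ Z (x b) - Z (x a) := by
  have hderiv : ∀ t ∈ Icc a b, HasDerivAt (fun t => Z (x t)) (Z' (x t) (f (x t))) t :=
    fun t ht => hasDerivAt_comp_orbit hZ hxS hx (ha.trans ht.1)
  refine (convex_Icc a b).mul_sub_le_image_sub_of_le_deriv
    (fun t ht => (hderiv t ht).continuousAt.continuousWithinAt)
    (fun t ht => (hderiv t (interior_subset ht)).differentiableAt.differentiableWithinAt)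
    (fun t ht => ?_) a (left_mem_Icc.mpr hab) b (right_mem_Icc.mpr hab) hab
  rw [(hderiv t (interior_subset ht)).deriv]
  exact hc t (interior_subset ht)

theorem not_exists_bounds_near_omegaLimit (hZ : ∀ y ∈ S, HasFDerivAt Z (Z' y) y)
    (hpos : ∀ y ∈ S, 0 < Z' y (f y))
    (hxS : ∀ t, 0 ≤ t → x t ∈ S) (hx : ∀ t, 0 ≤ t → HasDerivAt x (f (x t)) t)
    {p : E} {tn : ℕ → ℝ} (htn : Tendsto tn atTop atTop)
    (hxtn : Tendsto (fun j => x (tn j)) atTop (𝓝[S] p)) :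
    ¬ ∃ c > 0, ∃ M K : ℝ, ∀ᶠ y in 𝓝[S] p, c < Z' y (f y) ∧ ‖f y‖ < M ∧ Z y < K := by
  rintro ⟨c, hc, M, K, hbounds⟩
  obtain ⟨δ, hδ, hball⟩ : ∃ δ > 0, ∀ y ∈ S, dist y p < δ →
      c < Z' y (f y) ∧ ‖f y‖ < M ∧ Z y < K := by
    obtain ⟨δ, hδ, h⟩ := Metric.eventually_nhds_iff.mp (eventually_nhdsWithin_iff.mp hbounds)
    exact ⟨δ, hδ, fun y hy hyp => h hyp hy⟩
  have hreturn : ∀ T r, 0 < r → ∃ t, T ≤ t ∧ dist (x t) p < r := fun T r hr =>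
    let ⟨j, hj⟩ := ((htn.eventually_ge_atTop T).and
      (hxtn (mem_nhdsWithin_of_mem_nhds (Metric.ball_mem_nhds p hr)))).exists
    ⟨tn j, hj⟩
  set g : ℝ → ℝ := fun t => Z (x t)
  have hmono := strictMonoOn_comp_orbit hZ hpos hxS hx
  have hbdd : BddAbove (g '' Ici 0) := by
    refine ⟨K, forall_mem_image.mpr fun t (ht : 0 ≤ t) => ?_⟩
    obtain ⟨s, hts, hs⟩ := hreturn t δ hδ
    exact (hmono.monotoneOn ht (ht.trans hts) hts).trans
      (hball _ (hxS s (ht.trans hts)) hs).2.2.le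
  have hL : ∀ t, 0 ≤ t → g t ≤ sSup (g '' Ici 0) := fun t ht =>
    le_csSup hbdd (mem_image_of_mem g (mem_Ici.mpr ht))
  obtain ⟨τ, hτ, hMτ⟩ := exists_pos_mul_lt (half_pos hδ) M
  obtain ⟨_, ⟨t₁, (ht₁ : 0 ≤ t₁), rfl⟩, hgt₁⟩ :=
    exists_lt_of_lt_csSup (nonempty_Ici.image g) (sub_lt_self _ (mul_pos hc hτ))
  obtain ⟨t₀, ht₁₀, ht₀⟩ := hreturn t₁ (δ / 2) (half_pos hδ)
  have ht₀0 : 0 ≤ t₀ := ht₁.trans ht₁₀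
  have hM : 0 ≤ M := (norm_nonneg _).trans (hball _ (hxS t₀ ht₀0) (by linarith)).2.1.le
  have hstay : ∀ t ∈ Icc t₀ (t₀ + τ), dist (x t) p < δ :=
    dist_lt_of_norm_deriv_lt_on_ball (fun t ht => hx t (ht₀0.trans ht.1))
      (fun t ht hd => (hball _ (hxS t (ht₀0.trans ht.1)) hd).2.1) hM (by linarith)
  have hgain : c * (t₀ + τ - t₀) ≤ g (t₀ + τ) - g t₀ :=
    mul_sub_le_comp_orbit_sub hZ hxS hx ht₀0 (by linarith)
      fun t ht => (hball _ (hxS t (ht₀0.trans ht.1)) (hstay t ht)).1.le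
  have hle := hmono.monotoneOn ht₁ ht₀0 ht₁₀
  have hsup := hL (t₀ + τ) (by linarith)
  simp only [add_sub_cancel_left] at hgain
  linarith

theorem exists_bounds_near_of_mem (hf : ContinuousOn f S) (hZ : ∀ y ∈ S, HasFDerivAt Z (Z' y) y)
    (hZ' : ContinuousOn Z' S) (hpos : ∀ y ∈ S, 0 < Z' y (f y)) {p : E} (hp : p ∈ S) :
    ∃ c > 0, ∃ M K : ℝ, ∀ᶠ y in 𝓝[S] p, c < Z' y (f y) ∧ ‖f y‖ < M ∧ Z y < K := by
  have hZ'f : ContinuousWithinAt (fun y => Z' y (f y)) S p := (hZ'.clm_apply hf) p hp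
  have hc := continuousWithinAt_const.eventually_lt hZ'f (half_lt_self (hpos p hp))
  have hM := (hf p hp).norm.eventually_lt continuousWithinAt_const (lt_add_one _)
  have hK := ((hZ p hp).continuousAt.continuousWithinAt (s := S)).eventually_lt
    continuousWithinAt_const (lt_add_one _)
  exact ⟨_, half_pos (hpos p hp), _, _, hc.and (hM.and hK)⟩

theorem exists_bounds_near_of_ne (hpos : ∀ y ∈ S, 0 < Z' y (f y)) {p : E}
    (hZ : limsup (fun y => (Z y : EReal)) (𝓝[S] p) ≠ ⨆ y ∈ S, (Z y : EReal))
    (hZ'f : liminf (fun y => ((Z' y (f y) : ℝ) : EReal)) (𝓝[S] p) ≠ 0)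
    (hf : limsup (fun y => ((‖f y‖ : ℝ) : EReal)) (𝓝[S] p) ≠ ⊤) :
    ∃ c > 0, ∃ M K : ℝ, ∀ᶠ y in 𝓝[S] p, c < Z' y (f y) ∧ ‖f y‖ < M ∧ Z y < K := by
  have hlimsup_le : limsup (fun y => (Z y : EReal)) (𝓝[S] p) ≤ ⨆ y ∈ S, (Z y : EReal) :=
    limsup_le_of_le (by isBoundedDefault) <| eventually_mem_nhdsWithin.mono fun y hy =>
      le_iSup₂ (f := fun y _ => (Z y : EReal)) y hy
  have hliminf_nonneg : 0 ≤ liminf (fun y => ((Z' y (f y) : ℝ) : EReal)) (𝓝[S] p) :=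
    le_liminf_of_le (by isBoundedDefault) <| eventually_mem_nhdsWithin.mono fun y hy =>
      EReal.coe_nonneg.mpr (hpos y hy).le
  obtain ⟨K, hK⟩ := exists_eventually_lt_of_limsup_coe_lt_top
    ((hlimsup_le.lt_of_ne hZ).trans_le le_top)
  obtain ⟨c, hc, hcZ'f⟩ := exists_eventually_lt_of_coe_lt_liminf (b := 0)
    (hliminf_nonneg.lt_of_ne hZ'f.symm)
  obtain ⟨M, hM⟩ := exists_eventually_lt_of_limsup_coe_lt_top hf.lt_top
  exact ⟨c, hc, M, K, hcZ'f.and (hM.and hK)⟩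

theorem iInf_lt_limsup_near_omegaLimit (hZ : ∀ y ∈ S, HasFDerivAt Z (Z' y) y)
    (hpos : ∀ y ∈ S, 0 < Z' y (f y))
    (hxS : ∀ t, 0 ≤ t → x t ∈ S) (hx : ∀ t, 0 ≤ t → HasDerivAt x (f (x t)) t)
    {p : E} {tn : ℕ → ℝ} (htn : Tendsto tn atTop atTop)
    (hxtn : Tendsto (fun j => x (tn j)) atTop (𝓝[S] p)) :
    (⨅ y ∈ S, (Z y : EReal)) < limsup (fun y => (Z y : EReal)) (𝓝[S] p) := by
  have hmono := strictMonoOn_comp_orbit hZ hpos hxS hx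
  have hfreq : ∃ᶠ y in 𝓝[S] p, (Z (x 1) : EReal) ≤ Z y :=
    hxtn.frequently <| (htn.eventually_ge_atTop 1).frequently.mono fun j hj =>
      EReal.coe_le_coe_iff.mpr <|
        hmono.monotoneOn (mem_Ici.mpr zero_le_one) (mem_Ici.mpr (zero_le_one.trans hj)) hj
  calc (⨅ y ∈ S, (Z y : EReal)) ≤ Z (x 0) := iInf₂_le (x 0) (hxS 0 le_rfl)
    _ < Z (x 1) :=
      EReal.coe_lt_coe_iff.mpr (hmono (mem_Ici.mpr le_rfl) (mem_Ici.mpr zero_le_one) zero_lt_one)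
    _ ≤ limsup (fun y => (Z y : EReal)) (𝓝[S] p) := le_limsup_of_frequently_le hfreq

end Orbit

/-- **Monotonicity principle.** Let `S ⊆ ℝⁿ` be open, `f : S → ℝⁿ`
continuous, and `x : [0,∞) → S` a `C¹` solution of `dx/dt = f(x)`. Let `Z : S → ℝ`
be `C¹` with `∇Z·f > 0` on `S`. Then every ω-limit point `s̄` of the curve `x`
satisfies: (i) `s̄ ∉ S` (it lies on the boundary of `S`); (ii)
`limsup_{y→s̄, y∈S} Z(y) > inf_S Z`; and (iii) either
`limsup_{y→s̄, y∈S} Z(y) = sup_S Z`, or `liminf_{y→s̄, y∈S} (∇Z·f)(y) = 0`, or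
`limsup_{y→s̄, y∈S} |f(y)| = ∞`. -/
theorem stmt2
    (n : ℕ)
    (S : Set (EuclideanSpace ℝ (Fin n))) (hS : IsOpen S)
    (f : EuclideanSpace ℝ (Fin n) → EuclideanSpace ℝ (Fin n))
    (hf : ContinuousOn f S)
    (Z : EuclideanSpace ℝ (Fin n) → ℝ)
    (Z' : EuclideanSpace ℝ (Fin n) → (EuclideanSpace ℝ (Fin n) →L[ℝ] ℝ))
    (hZderiv : ∀ y ∈ S, HasFDerivAt Z (Z' y) y)
    (hZ'cont : ContinuousOn Z' S)
    (hpos : ∀ y ∈ S, 0 < Z' y (f y))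
    (x : ℝ → EuclideanSpace ℝ (Fin n))
    (hxS : ∀ t : ℝ, 0 ≤ t → x t ∈ S)
    (hxode : ∀ t : ℝ, 0 ≤ t → HasDerivAt x (f (x t)) t)
    (sbar : EuclideanSpace ℝ (Fin n))
    (hlimpt : ∃ tn : ℕ → ℝ, (∀ j, 0 ≤ tn j) ∧ Tendsto tn atTop atTop ∧
      Tendsto (fun j => x (tn j)) atTop (nhds sbar)) :
    sbar ∉ S ∧ sbar ∈ frontier S ∧
    (⨅ y ∈ S, (Z y : EReal)) <
      Filter.limsup (fun y => (Z y : EReal)) (nhdsWithin sbar S) ∧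
    (Filter.limsup (fun y => (Z y : EReal)) (nhdsWithin sbar S) =
        (⨆ y ∈ S, (Z y : EReal)) ∨
      Filter.liminf (fun y => ((Z' y (f y) : ℝ) : EReal)) (nhdsWithin sbar S) =
        (0 : EReal) ∨
      Filter.limsup (fun y => ((‖f y‖ : ℝ) : EReal)) (nhdsWithin sbar S) = ⊤) := by
  obtain ⟨tn, htn0, htn, hxtn⟩ := hlimpt
  have hxtnS : ∀ᶠ j in atTop, x (tn j) ∈ S := Eventually.of_forall fun j => hxS _ (htn0 j)
  have hxtn' := tendsto_nhdsWithin_iff.mpr ⟨hxtn, hxtnS⟩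
  have hnear := not_exists_bounds_near_omegaLimit hZderiv hpos hxS hxode htn hxtn'
  have hnotin : sbar ∉ S := fun hp =>
    hnear (exists_bounds_near_of_mem hf hZderiv hZ'cont hpos hp)
  refine ⟨hnotin, ⟨mem_closure_of_tendsto hxtn hxtnS, by rwa [hS.interior_eq]⟩,
    iInf_lt_limsup_near_omegaLimit hZderiv hpos hxS hxode htn hxtn', ?_⟩
  by_contra! h
  exact hnear (exists_bounds_near_of_ne hpos h.1 h.2.1 h.2.2)
end

section
/- Every interior orbit of the Einstein–Vlasov dynamical system satisfies Ω(λ) → 0 as λ → +∞; equivalently, the ω-limit set (in [0,1]³) of every interior orbit is contained in the face {Ω = 0}. -/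
open Filter Set Topology

lemma myMvtGe (f f' : ℝ → ℝ) (hf : ∀ t, HasDerivAt f (f' t) t)
    {a b m : ℝ} (hab : a ≤ b) (hm : ∀ t ∈ Icc a b, m ≤ f' t) :
    f a + m * (b - a) ≤ f b := by
  have key : MonotoneOn (fun t => f t - m * t) (Icc a b) := by
    apply monotoneOn_of_deriv_nonneg (convex_Icc a b)
    · exact fun x _ => ((hf x).sub ((hasDerivAt_id x).const_mul m)).continuousAt.continuousWithinAt
    · intro x hx
      exact (((hf x).sub ((hasDerivAt_id x).const_mul m)).differentiableAt).differentiableWithinAt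
    · intro x hx
      rw [interior_Icc] at hx
      have hd : HasDerivAt (fun t => f t - m * t) (f' x - m) x := by
        have h := (hf x).sub ((hasDerivAt_id' x).const_mul m)
        rw [mul_one] at h
        exact h
      rw [hd.deriv]
      have := hm x (Ioo_subset_Icc_self hx)
      linarith
  have := key (left_mem_Icc.2 hab) (right_mem_Icc.2 hab) hab
  simp only at this
  nlinarith [this]

lemma myMvtLe (f f' : ℝ → ℝ) (hf : ∀ t, HasDerivAt f (f' t) t)
    {a b m : ℝ} (hab : a ≤ b) (hm : ∀ t ∈ Icc a b, f' t ≤ m) :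
    f b ≤ f a + m * (b - a) := by
  have h := myMvtGe (fun t => -f t) (fun t => -f' t) (fun t => (hf t).neg) hab
    (m := -m) (fun t ht => by show -m ≤ -f' t; linarith [hm t ht])
  linarith

lemma myBarrier (f f' : ℝ → ℝ) (hf : ∀ t, HasDerivAt f (f' t) t)
    {a b : ℝ} (ha : b < f a) (hbar : ∀ t, a ≤ t → f t = b → 0 < f' t) :
    ∀ t, a ≤ t → b < f t := by
  by_contra hcon
  push_neg at hcon
  obtain ⟨t₂, hat₂, ht₂⟩ := hcon
  have hfc : Continuous f := by
    have hd : Differentiable ℝ f := fun x => (hf x).differentiableAt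
    exact hd.continuous
  set S : Set ℝ := Icc a t₂ ∩ f ⁻¹' (Iic b) with hSdef
  have hSc : IsClosed S := isClosed_Icc.inter (isClosed_Iic.preimage hfc)
  have hne : S.Nonempty := ⟨t₂, ⟨hat₂, le_refl _⟩, ht₂⟩
  have hbdd : BddBelow S := (bddBelow_Icc : BddBelow (Icc a t₂)).mono inter_subset_left
  set s₀ := sInf S with hs₀def
  have hs₀S : s₀ ∈ S := hSc.csInf_mem hne hbdd
  have has₀ : a < s₀ := by
    have hle : a ≤ s₀ := le_csInf hne (fun x hx => hx.1.1)
    rcases eq_or_lt_of_le hle with h | h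
    · exact absurd (mem_Iic.1 hs₀S.2) (not_le.2 (h ▸ ha))
    · exact h
  have hleft : ∀ s, a ≤ s → s < s₀ → b < f s := by
    intro s hs hss
    by_contra hb
    push_neg at hb
    have : s ∈ S := ⟨⟨hs, le_trans hss.le hs₀S.1.2⟩, hb⟩
    exact absurd (csInf_le hbdd this) (not_le.2 hss)
  have hfs₀ : f s₀ = b := by
    have hle : f s₀ ≤ b := hs₀S.2
    rcases lt_or_eq_of_le hle with h | h
    · exfalso
      have h1 : ∀ᶠ s in 𝓝[<] s₀, f s < b :=
        ((hfc.tendsto s₀).eventually (eventually_iff.2 (Iio_mem_nhds h))).filter_mono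
          nhdsWithin_le_nhds
      have h2 : ∀ᶠ s in 𝓝[<] s₀, s ∈ Ioo a s₀ :=
        eventually_mem_set.2 (Ioo_mem_nhdsLT_of_mem ⟨has₀, le_refl s₀⟩)
      obtain ⟨s, hs1, hs2⟩ := (h1.and h2).exists
      exact absurd hs1 (not_lt.2 (hleft s hs2.1.le hs2.2).le)
    · exact h
  have hslope : f' s₀ ≤ 0 := by
    have ht := hasDerivAt_iff_tendsto_slope.1 (hf s₀)
    have ht' : Tendsto (slope f s₀) (𝓝[<] s₀) (𝓝 (f' s₀)) :=
      ht.mono_left (nhdsWithin_mono _ (fun x hx => ne_of_lt hx))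
    refine le_of_tendsto ht' ?_
    have hmem : Ioo a s₀ ∈ 𝓝[<] s₀ := Ioo_mem_nhdsLT_of_mem ⟨has₀, le_refl _⟩
    filter_upwards [hmem] with s hs
    have hfs : b < f s := hleft s hs.1.le hs.2
    have : slope f s₀ s = (f s - f s₀) / (s - s₀) := by
      rw [slope_def_field]
    rw [this]
    apply div_nonpos_of_nonneg_of_nonpos <;> [skip; linarith [hs.2]]
    rw [hfs₀]; linarith
  exact absurd (hbar s₀ has₀.le hfs₀) (not_lt.2 hslope)

set_option maxHeartbeats 1000000 in
/-- Every interior orbit of the Einstein–Vlasov dynamical system satisfies `Ω → 0` as `λ → +∞`; equivalently its ω-limit set lies in the face `{Ω = 0}`. -/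
theorem stmt6
    (l : ℝ) (hl : -1 < l)
    (σ σ' : ℝ → ℝ)
    (hσderiv : ∀ η : ℝ, 0 < η → HasDerivAt σ (σ' η) η)
    (hσ'cont : ContinuousOn σ' (Ioi 0))
    (hσrange : ∀ η : ℝ, 0 < η → σ η ∈ Ioo 0 (1 / (3 + 2 * l)))
    (hσ0 : Tendsto σ (nhdsWithin 0 (Ioi 0)) (nhds 0))
    (k₁ k₂ : ℝ) (hk₁ : 0 < k₁) (hk₁₂ : k₁ < k₂)
    (hσ'near : ∃ η₀ > (0:ℝ), ∀ η ∈ Ioo (0:ℝ) η₀, σ' η ∈ Ioo k₁ k₂)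
    (ω ω' : ℝ → ℝ)
    (hωsmooth : ContDiffOn ℝ (⊤ : ℕ∞) ω (Ioi 0))
    (hωderiv : ∀ η : ℝ, 0 < η → HasDerivAt ω (ω' η) η)
    (hωpos : ∀ η : ℝ, 0 < η → 0 < ω η)
    (hωmono : StrictMonoOn ω (Ioi 0))
    (hω0 : Tendsto ω (nhdsWithin 0 (Ioi 0)) (nhds 0))
    (F : ℝ → ℝ) (hFdef : ∀ η : ℝ, 0 < η → F η = σ η * (ω' η / ω η))
    (Flo Fhi : ℝ) (hFlo : 0 < Flo)
    (hFbounds : ∀ η : ℝ, 0 < η → F η ∈ Icc Flo Fhi)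
    (U V E Ω : ℝ → ℝ)
    (hΩdef : ∀ t : ℝ, Ω t = ω (E t) / (1 + ω (E t)))
    (hU : ∀ t : ℝ, U t ∈ Ioo (0:ℝ) 1) (hV : ∀ t : ℝ, V t ∈ Ioo (0:ℝ) 1)
    (hE : ∀ t : ℝ, 0 < E t) (hEcont : Continuous E)
    (hUode : ∀ t : ℝ, HasDerivAt U
      (U t * (1 - U t) * ((3 + 2 * l - (4 + 2 * l) * U t) * (1 - V t)
        - (1 + σ (E t) - σ' (E t)) * ((1 - U t + σ (E t) * U t) * V t))) t)
    (hVode : ∀ t : ℝ, HasDerivAt V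
      (V t * (1 - V t) * ((2 * U t - 1) * (1 - V t + 2 * σ (E t) * V t)
        + σ' (E t) * ((1 - U t + σ (E t) * U t) * V t))) t)
    (hΩode : ∀ t : ℝ, HasDerivAt Ω
      (-(Ω t * (1 - Ω t) * F (E t) * ((1 - U t + σ (E t) * U t) * V t))) t) :
    Tendsto Ω atTop (nhds 0) := by
  have h3l : (1:ℝ) < 3 + 2 * l := by linarith
  have h4l : (0:ℝ) < 4 + 2 * l := by linarith
  have hσt : ∀ t, σ (E t) ∈ Ioo (0:ℝ) 1 := by
    intro t
    obtain ⟨h1, h2⟩ := hσrange _ (hE t)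
    exact ⟨h1, lt_trans h2 (by rw [div_lt_one (by linarith)]; exact h3l)⟩
  have hfac : ∀ t, σ (E t) ≤ 1 - U t + σ (E t) * U t ∧ 1 - U t + σ (E t) * U t ≤ 1 := by
    intro t
    obtain ⟨hu0, hu1⟩ := hU t; obtain ⟨hs0, hs1⟩ := hσt t
    constructor <;> nlinarith
  have hHpos : ∀ t, 0 < (1 - U t + σ (E t) * U t) * V t := by
    intro t
    obtain ⟨hu0, hu1⟩ := hU t; obtain ⟨hs0, hs1⟩ := hσt t; obtain ⟨hv0, hv1⟩ := hV t
    nlinarith [(hfac t).1]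
  have hHleV : ∀ t, (1 - U t + σ (E t) * U t) * V t ≤ V t := by
    intro t
    obtain ⟨hv0, hv1⟩ := hV t
    nlinarith [(hfac t).2]
  have hHgeσV : ∀ t, σ (E t) * V t ≤ (1 - U t + σ (E t) * U t) * V t := by
    intro t
    nlinarith [(hfac t).1, (hV t).1]
  have hΩ01 : ∀ t, Ω t ∈ Ioo (0:ℝ) 1 := by
    intro t
    rw [hΩdef t]
    have hw := hωpos _ (hE t)
    constructor
    · positivity
    · rw [div_lt_one (by linarith)]; linarith
  have hFlo' : ∀ t, Flo ≤ F (E t) := fun t => (hFbounds _ (hE t)).1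
  -- Ω is antitone
  have hΩanti : Antitone Ω := by
    intro s t hst
    have key := myMvtLe Ω _ hΩode hst (m := 0) ?_
    · linarith [key]
    · intro r _
      have h1 := hΩ01 r
      have h2 := hHpos r
      have h3 := lt_of_lt_of_le hFlo (hFlo' r)
      have h4 : 0 < Ω r * (1 - Ω r) * F (E r) * ((1 - U r + σ (E r) * U r) * V r) :=
        mul_pos (mul_pos (mul_pos h1.1 (by linarith [h1.2])) h3) h2
      linarith
  have hbddΩ : BddBelow (range Ω) := ⟨0, by rintro x ⟨t, rfl⟩; exact (hΩ01 t).1.le⟩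
  have hLten : Tendsto Ω atTop (𝓝 (⨅ t, Ω t)) := tendsto_atTop_ciInf hΩanti hbddΩ
  set L := ⨅ t, Ω t with hLdef
  have hLle : ∀ t, L ≤ Ω t := fun t => ciInf_le hbddΩ t
  have hL0 : 0 ≤ L := le_ciInf fun t => (hΩ01 t).1.le
  rcases eq_or_lt_of_le hL0 with hL0' | hLpos
  · rwa [← hL0'] at hLten
  exfalso
  -- Step B : E bounded below
  have hL1 : L < 1 := lt_of_le_of_lt (hLle 0) (hΩ01 0).2
  have hr : 0 < L / (1 - L) := div_pos hLpos (by linarith)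
  obtain ⟨δ, hδpos, hδ⟩ : ∃ δ > 0, ∀ η, 0 < η → η < δ → ω η < L / (1 - L) := by
    have h1 : ∀ᶠ η in 𝓝[>] (0:ℝ), ω η < L / (1 - L) :=
      hω0.eventually (eventually_iff.2 (Iio_mem_nhds hr))
    rw [eventually_nhdsWithin_iff, Metric.eventually_nhds_iff] at h1
    obtain ⟨d0, hd0, hd⟩ := h1
    exact ⟨d0, hd0, fun η h0 hη =>
      hd (by rw [Real.dist_eq, sub_zero, abs_of_pos h0]; exact hη) h0⟩
  have hωE_ge : ∀ t, L / (1 - L) ≤ ω (E t) := by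
    intro t
    have h1 := hLle t
    rw [hΩdef t] at h1
    have hw := hωpos _ (hE t)
    rw [le_div_iff₀ (by linarith : (0:ℝ) < 1 + ω (E t))] at h1
    rw [div_le_iff₀ (by linarith : (0:ℝ) < 1 - L)]
    nlinarith
  have hEδ : ∀ t, δ ≤ E t := by
    intro t
    by_contra hc
    push_neg at hc
    exact absurd (hωE_ge t) (not_le.2 (hδ _ (hE t) hc))
  -- Step C : E t ≤ E 0 for t ≥ 0
  have hEle : ∀ t, 0 ≤ t → E t ≤ E 0 := by
    intro t ht
    by_contra hc
    push_neg at hc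
    have h1 := hΩanti ht
    rw [hΩdef t, hΩdef 0] at h1
    have hw1 := hωpos _ (hE t); have hw2 := hωpos _ (hE 0)
    rw [div_le_div_iff₀ (by linarith) (by linarith)] at h1
    have h2 : ω (E 0) < ω (E t) := hωmono (hE 0) (hE t) hc
    nlinarith
  have hEmem : ∀ t, 0 ≤ t → E t ∈ Icc δ (E 0) := fun t ht => ⟨hEδ t, hEle t ht⟩
  have hδE0 : δ ≤ E 0 := hEδ 0
  have hKsub : Icc δ (E 0) ⊆ Ioi 0 := fun x hx => lt_of_lt_of_le hδpos hx.1
  -- Step D : compact bounds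
  have hσcont : ContinuousOn σ (Icc δ (E 0)) := fun x hx =>
    ((hσderiv x (hKsub hx)).continuousAt).continuousWithinAt
  obtain ⟨ηm, hηm, hηmin⟩ := isCompact_Icc.exists_isMinOn (nonempty_Icc.2 hδE0) hσcont
  have hσmpos : 0 < σ ηm := (hσrange _ (hKsub hηm)).1
  have hσm : ∀ t, 0 ≤ t → σ ηm ≤ σ (E t) := fun t ht => hηmin (hEmem t ht)
  obtain ⟨M₀, hM₀⟩ := isCompact_Icc.exists_bound_of_continuousOn (hσ'cont.mono hKsub)
  have hM1 : (1:ℝ) ≤ M₀ ⊔ 1 := le_max_right _ _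
  set M := M₀ ⊔ 1 with hMdef
  have hM : ∀ t, 0 ≤ t → |σ' (E t)| ≤ M := fun t ht => by
    have := hM₀ _ (hEmem t ht)
    rw [Real.norm_eq_abs] at this
    exact le_trans this (le_max_left _ _)
  -- Step E : Ω' ≤ -c0 V for t ≥ 0
  have h1Ω0 : 0 < 1 - Ω 0 := by linarith [(hΩ01 0).2]
  set c0 := L * (1 - Ω 0) * Flo * σ ηm with hc0def
  have hc0 : 0 < c0 := by positivity
  have hΩ'le : ∀ t, 0 ≤ t →
      -(Ω t * (1 - Ω t) * F (E t) * ((1 - U t + σ (E t) * U t) * V t)) ≤ -(c0 * V t) := by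
    intro t ht
    have e1 : L ≤ Ω t := hLle t
    have e2 : 1 - Ω 0 ≤ 1 - Ω t := by linarith [hΩanti ht]
    have e3 := hFlo' t
    have e4 : σ ηm * V t ≤ (1 - U t + σ (E t) * U t) * V t :=
      le_trans (mul_le_mul_of_nonneg_right (hσm t ht) (hV t).1.le) (hHgeσV t)
    have p2 : L * (1 - Ω 0) ≤ Ω t * (1 - Ω t) := mul_le_mul e1 e2 h1Ω0.le (hΩ01 t).1.le
    have p3 : L * (1 - Ω 0) * Flo ≤ Ω t * (1 - Ω t) * F (E t) :=
      mul_le_mul p2 e3 hFlo.le (by nlinarith [(hΩ01 t).1, (hΩ01 t).2])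
    have p4 : 0 ≤ σ ηm * V t := mul_nonneg hσmpos.le (hV t).1.le
    have p5 : 0 ≤ Ω t * (1 - Ω t) * F (E t) := by
      nlinarith [(hΩ01 t).1, (hΩ01 t).2, hFlo' t, hFlo]
    have key : c0 * V t ≤ Ω t * (1 - Ω t) * F (E t) * ((1 - U t + σ (E t) * U t) * V t) := by
      calc c0 * V t = (L * (1 - Ω 0) * Flo) * (σ ηm * V t) := by rw [hc0def]; ring
        _ ≤ Ω t * (1 - Ω t) * F (E t) * ((1 - U t + σ (E t) * U t) * V t) :=
          mul_le_mul p3 e4 p4 p5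
    linarith
  -- lower bound on V'
  have hV'lb : ∀ t, 0 ≤ t → -(3 + M) ≤ V t * (1 - V t) * ((2 * U t - 1) * (1 - V t + 2 * σ (E t) * V t)
        + σ' (E t) * ((1 - U t + σ (E t) * U t) * V t)) := by
    intro t ht
    obtain ⟨hu0, hu1⟩ := hU t; obtain ⟨hv0, hv1⟩ := hV t; obtain ⟨hs0, hs1⟩ := hσt t
    obtain ⟨hMl, hMr⟩ := abs_le.1 (hM t ht)
    have hH0 := (hHpos t).le
    have hHV := hHleV t
    have hσV0 : (0:ℝ) ≤ σ (E t) * V t := mul_nonneg hs0.le hv0.le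
    have hσV1 : σ (E t) * V t ≤ 1 := mul_le_one₀ hs1.le hv0.le hv1.le
    have h1 : (0:ℝ) ≤ 1 - V t + 2 * σ (E t) * V t := by linarith
    have h2 : 1 - V t + 2 * σ (E t) * V t ≤ 3 := by linarith
    have h3 : -(3 + M) ≤ (2 * U t - 1) * (1 - V t + 2 * σ (E t) * V t)
        + σ' (E t) * ((1 - U t + σ (E t) * U t) * V t) := by
      have g1 : (0:ℝ) ≤ (2 * U t) * (1 - V t + 2 * σ (E t) * V t) :=
        mul_nonneg (by linarith) h1
      have g2 : (0:ℝ) ≤ (σ' (E t) + M) * ((1 - U t + σ (E t) * U t) * V t) :=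
        mul_nonneg (by linarith) hH0
      have g3 : M * ((1 - U t + σ (E t) * U t) * V t) ≤ M * 1 :=
        mul_le_mul_of_nonneg_left (le_trans hHV hv1.le) (by linarith)
      have e1 : (2 * U t - 1) * (1 - V t + 2 * σ (E t) * V t)
          = (2 * U t) * (1 - V t + 2 * σ (E t) * V t) - (1 - V t + 2 * σ (E t) * V t) := by ring
      have e2 : σ' (E t) * ((1 - U t + σ (E t) * U t) * V t)
          = (σ' (E t) + M) * ((1 - U t + σ (E t) * U t) * V t)
            - M * ((1 - U t + σ (E t) * U t) * V t) := by ring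
      linarith [g1, g2, g3, h2, e1, e2]
    have hA0 : 0 ≤ V t * (1 - V t) := mul_nonneg hv0.le (by linarith)
    have hA1 : V t * (1 - V t) ≤ 1 := mul_le_one₀ hv1.le (by linarith) (by linarith)
    have q1 : (0:ℝ) ≤ (V t * (1 - V t)) * ((2 * U t - 1) * (1 - V t + 2 * σ (E t) * V t)
        + σ' (E t) * ((1 - U t + σ (E t) * U t) * V t) + (3 + M)) :=
      mul_nonneg hA0 (by linarith)
    have q2 : (V t * (1 - V t)) * (3 + M) ≤ 1 * (3 + M) :=
      mul_le_mul_of_nonneg_right hA1 (by linarith)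
    have e3 : V t * (1 - V t) * ((2 * U t - 1) * (1 - V t + 2 * σ (E t) * V t)
        + σ' (E t) * ((1 - U t + σ (E t) * U t) * V t))
        = (V t * (1 - V t)) * ((2 * U t - 1) * (1 - V t + 2 * σ (E t) * V t)
        + σ' (E t) * ((1 - U t + σ (E t) * U t) * V t) + (3 + M))
          - (V t * (1 - V t)) * (3 + M) := by ring
    linarith [q1, q2, e3]
  have hCL : (0:ℝ) < 3 + M := by linarith
  -- Step F : V tends to 0
  have hVtend : Tendsto V atTop (𝓝 0) := by
    by_contra hnot
    obtain ⟨ε, hε, hfreq⟩ : ∃ ε > (0:ℝ), ∀ T : ℝ, ∃ t, T ≤ t ∧ ε ≤ V t := by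
      rw [Metric.tendsto_atTop] at hnot
      push_neg at hnot
      obtain ⟨ε, hε, hfr⟩ := hnot
      refine ⟨ε, hε, fun T => ?_⟩
      obtain ⟨t, hT, hdd⟩ := hfr T
      exact ⟨t, hT, by rwa [Real.dist_eq, sub_zero, abs_of_pos (hV t).1] at hdd⟩
    set h := ε / (2 * (3 + M)) with hhdef
    have hh : 0 < h := by positivity
    set d := c0 * (ε / 2) * h with hddef
    have hd : 0 < d := by positivity
    have hdrop : ∀ t₀, 0 ≤ t₀ → ε ≤ V t₀ → Ω (t₀ + h) ≤ Ω t₀ - d := by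
      intro t₀ ht₀ hεV
      have hVlow : ∀ s, s ∈ Icc t₀ (t₀ + h) → ε / 2 ≤ V s := by
        intro s hs
        have key := myMvtGe V _ hVode hs.1 (m := -(3 + M))
          (fun r hr => hV'lb r (le_trans ht₀ hr.1))
        have hsl : s - t₀ ≤ h := by linarith [hs.2]
        have hch : (3 + M) * h = ε / 2 := by
          rw [hhdef]; field_simp
        nlinarith [key, hsl, hCL, hs.1]
      have key := myMvtLe Ω _ hΩode (by linarith : t₀ ≤ t₀ + h) (m := -(c0 * (ε / 2)))
        (fun r hr => ?_)
      · have : Ω (t₀ + h) ≤ Ω t₀ + -(c0 * (ε / 2)) * (t₀ + h - t₀) := key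
        rw [hddef]
        linarith [this]
      · have hr0 : 0 ≤ r := le_trans ht₀ hr.1
        have h1 := hΩ'le r hr0
        have h2 : c0 * (ε / 2) ≤ c0 * V r :=
          mul_le_mul_of_nonneg_left (hVlow r hr) hc0.le
        linarith
    have key : ∀ n : ℕ, ∃ t, 0 ≤ t ∧ Ω t ≤ Ω 0 - n * d := by
      intro n
      induction n with
      | zero => exact ⟨0, le_refl _, by simp⟩
      | succ n ih =>
        obtain ⟨t, ht0, hΩt⟩ := ih
        obtain ⟨t', htt', hεt'⟩ := hfreq t
        have h1 := hdrop t' (le_trans ht0 htt') hεt'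
        have h2 : Ω t' ≤ Ω t := hΩanti htt'
        refine ⟨t' + h, by linarith, ?_⟩
        push_cast
        linarith
    obtain ⟨n, hn⟩ := exists_nat_gt (Ω 0 / d)
    obtain ⟨t, ht0, hΩt⟩ := key n
    rw [div_lt_iff₀ hd] at hn
    exact absurd (hΩ01 t).1 (not_lt.2 (by linarith))
  -- Step G : constants
  set Ust := (3 + 2 * l) / (4 + 2 * l) with hUstdef
  have hUsthalf : 1 / 2 < Ust := by
    rw [hUstdef, lt_div_iff₀ h4l]; linarith
  have hUst1 : Ust < 1 := by
    rw [hUstdef, div_lt_one h4l]; linarith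
  set u₁ := (1 / 2 + Ust) / 2 with hu₁def
  have hu₁a : 1 / 2 < u₁ := by rw [hu₁def]; linarith
  have hu₁b : u₁ < Ust := by rw [hu₁def]; linarith
  have hu₁1 : u₁ < 1 := lt_trans hu₁b hUst1
  set a := (4 + 2 * l) * (Ust - u₁) with hadef
  have ha : 0 < a := mul_pos h4l (by linarith)
  have hUstkey : (3 + 2 * l) = (4 + 2 * l) * Ust := by
    rw [hUstdef]; field_simp
  set ε₁ := a / (2 * (a + 2 + M)) with hε₁def
  have hε₁ : 0 < ε₁ := div_pos ha (by positivity)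
  have hε₁key : (a + 2 + M) * ε₁ = a / 2 := by
    rw [hε₁def]; field_simp
  -- bracket of U lower bound
  have hbrU : ∀ t, 0 ≤ t → U t ≤ u₁ → V t ≤ ε₁ →
      a / 2 ≤ (3 + 2 * l - (4 + 2 * l) * U t) * (1 - V t)
        - (1 + σ (E t) - σ' (E t)) * ((1 - U t + σ (E t) * U t) * V t) := by
    intro t ht hU₁ hVε
    obtain ⟨hv0, hv1⟩ := hV t; obtain ⟨hs0, hs1⟩ := hσt t
    obtain ⟨hMl, hMr⟩ := abs_le.1 (hM t ht)
    have hH0 := (hHpos t).le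
    have hHV := hHleV t
    have h1 : a ≤ 3 + 2 * l - (4 + 2 * l) * U t := by
      rw [hadef]
      have := mul_le_mul_of_nonneg_left hU₁ h4l.le
      linarith [hUstkey]
    have h2 : a * (1 - V t) ≤ (3 + 2 * l - (4 + 2 * l) * U t) * (1 - V t) :=
      mul_le_mul_of_nonneg_right h1 (by linarith)
    have h3 : (1 + σ (E t) - σ' (E t)) * ((1 - U t + σ (E t) * U t) * V t) ≤ (2 + M) * V t := by
      have g1 : (1 + σ (E t) - σ' (E t)) * ((1 - U t + σ (E t) * U t) * V t)
          ≤ (2 + M) * ((1 - U t + σ (E t) * U t) * V t) :=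
        mul_le_mul_of_nonneg_right (by linarith) hH0
      have g2 : (2 + M) * ((1 - U t + σ (E t) * U t) * V t) ≤ (2 + M) * V t :=
        mul_le_mul_of_nonneg_left hHV (by linarith)
      linarith
    have h4 : (a + 2 + M) * V t ≤ (a + 2 + M) * ε₁ :=
      mul_le_mul_of_nonneg_left hVε (by linarith)
    have e1 : a * (1 - V t) = a - a * V t := by ring
    have e2 : (a + 2 + M) * V t = a * V t + 2 * V t + M * V t := by ring
    have e3 : (2 + M) * V t = 2 * V t + M * V t := by ring
    linarith [h2, h3, h4, hε₁key, e1, e2, e3]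
  obtain ⟨T₀', hT₀'⟩ := eventually_atTop.1 (hVtend.eventually (eventually_iff.2 (Iio_mem_nhds hε₁)))
  set T₀ := max T₀' 0 with hT₀def
  have hT₀0 : (0:ℝ) ≤ T₀ := le_max_right _ _
  have hVT₀ : ∀ t, T₀ ≤ t → V t < ε₁ := fun t ht => hT₀' t (le_trans (le_max_left _ _) ht)
  -- Claim 1
  have hclaim1 : ∃ t₁, T₀ ≤ t₁ ∧ u₁ < U t₁ := by
    by_contra hc
    push_neg at hc
    have hmono : ∀ s t, T₀ ≤ s → s ≤ t → U s ≤ U t := by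
      intro s t hs hst
      have key := myMvtGe U _ hUode hst (m := 0) (fun r hr => ?_)
      · linarith [key]
      · have hrT : T₀ ≤ r := le_trans hs hr.1
        have hbr := hbrU r (le_trans hT₀0 hrT) (hc r hrT) (hVT₀ r hrT).le
        exact mul_nonneg (mul_nonneg (hU r).1.le (by linarith [(hU r).2]))
          (by linarith [hbr, ha])
    have hu₀ : 0 < U T₀ := (hU T₀).1
    set m' := U T₀ * (1 - u₁) * (a / 2) with hm'def
    have hm' : 0 < m' := by
      rw [hm'def]
      exact mul_pos (mul_pos hu₀ (by linarith)) (by linarith)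
    have hfin := myMvtGe U _ hUode
      (le_of_lt (lt_add_of_pos_right T₀ (by positivity : (0:ℝ) < 2 / m'))) (m := m')
      (fun r hr => ?_)
    · have hcalc : m' * (T₀ + 2 / m' - T₀) = 2 := by
        field_simp
        ring
      rw [hcalc] at hfin
      have := (hU (T₀ + 2 / m')).2
      linarith
    · have hrT : T₀ ≤ r := hr.1
      have hUr1 : U r ≤ u₁ := hc r hrT
      have hUr0 : U T₀ ≤ U r := hmono T₀ r (le_refl _) hrT
      have hbr := hbrU r (le_trans hT₀0 hrT) hUr1 (hVT₀ r hrT).le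
      have g1 : m' ≤ U r * (1 - U r) * (a / 2) := by
        rw [hm'def]
        have h5 : U T₀ * (1 - u₁) ≤ U r * (1 - U r) :=
          mul_le_mul hUr0 (by linarith) (by linarith) (hU r).1.le
        exact mul_le_mul_of_nonneg_right h5 (by linarith)
      have g2 : U r * (1 - U r) * (a / 2) ≤ U r * (1 - U r) * ((3 + 2 * l - (4 + 2 * l) * U r) * (1 - V r)
          - (1 + σ (E r) - σ' (E r)) * ((1 - U r + σ (E r) * U r) * V r)) :=
        mul_le_mul_of_nonneg_left hbr
          (mul_nonneg (hU r).1.le (by linarith [(hU r).2]))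
      linarith
  obtain ⟨t₁, hT₀t₁, ht₁⟩ := hclaim1
  -- Claim 2 : barrier
  have hbarrier : ∀ t, t₁ ≤ t → u₁ < U t := by
    apply myBarrier U _ hUode ht₁
    intro t htt hUeq
    have hrT : T₀ ≤ t := le_trans hT₀t₁ htt
    have hbr := hbrU t (le_trans hT₀0 hrT) (le_of_eq hUeq) (hVT₀ t hrT).le
    have hpos : 0 < U t * (1 - U t) :=
      mul_pos (hU t).1 (by linarith [(hU t).2])
    exact mul_pos hpos (lt_of_lt_of_le (by linarith) hbr)
  -- Step H
  set b := 2 * u₁ - 1 with hbdef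
  have hb : 0 < b := by rw [hbdef]; linarith
  have hbM : (0:ℝ) < b + M := by linarith
  obtain ⟨ε₂, hε₂, hε₂key⟩ : ∃ e : ℝ, 0 < e ∧ (b + M) * e = b / 2 :=
    ⟨b / (2 * (b + M)), div_pos hb (by linarith), by field_simp⟩
  obtain ⟨T₁', hT₁'⟩ := eventually_atTop.1 (hVtend.eventually (eventually_iff.2 (Iio_mem_nhds hε₂)))
  set T₁ := max t₁ T₁' with hT₁def
  have hVmono : ∀ t, T₁ ≤ t → V T₁ ≤ V t := by
    intro t ht
    have key := myMvtGe V _ hVode ht (m := 0) (fun r hr => ?_)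
    · linarith [key]
    · have hrt₁ : t₁ ≤ r := le_trans (le_max_left _ _) hr.1
      have hrT₁' : T₁' ≤ r := le_trans (le_max_right _ _) hr.1
      have hr0 : 0 ≤ r := le_trans hT₀0 (le_trans hT₀t₁ hrt₁)
      obtain ⟨hv0, hv1⟩ := hV r; obtain ⟨hs0, hs1⟩ := hσt r
      obtain ⟨hMl, hMr⟩ := abs_le.1 (hM r hr0)
      have hH0 := (hHpos r).le
      have hHV := hHleV r
      have h2U : b ≤ 2 * U r - 1 := by
        have := hbarrier r hrt₁
        rw [hbdef]; linarith
      have hVε := (hT₁' r hrT₁').le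
      have hσV0 : (0:ℝ) ≤ σ (E r) * V r := mul_nonneg hs0.le hv0.le
      have g1 : b * (1 - V r) ≤ (2 * U r - 1) * (1 - V r + 2 * σ (E r) * V r) :=
        mul_le_mul h2U (by linarith) (by linarith) (by linarith)
      have g2 : (0:ℝ) ≤ (σ' (E r) + M) * ((1 - U r + σ (E r) * U r) * V r) :=
        mul_nonneg (by linarith) hH0
      have g3 : M * ((1 - U r + σ (E r) * U r) * V r) ≤ M * V r :=
        mul_le_mul_of_nonneg_left hHV (by linarith)
      have h4 : (b + M) * V r ≤ (b + M) * ε₂ :=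
        mul_le_mul_of_nonneg_left hVε hbM.le
      have hbrpos : 0 ≤ (2 * U r - 1) * (1 - V r + 2 * σ (E r) * V r)
          + σ' (E r) * ((1 - U r + σ (E r) * U r) * V r) := by
        have e2 : σ' (E r) * ((1 - U r + σ (E r) * U r) * V r)
            = (σ' (E r) + M) * ((1 - U r + σ (E r) * U r) * V r)
              - M * ((1 - U r + σ (E r) * U r) * V r) := by ring
        have e4 : b * (1 - V r) = b - b * V r := by ring
        have e5 : (b + M) * V r = b * V r + M * V r := by ring
        clear_value b M
        linarith [g1, g2, g3, h4, hε₂key, hb, e2, e4, e5]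
      have hA0 : (0:ℝ) ≤ V r * (1 - V r) := mul_nonneg hv0.le (by linarith)
      exact mul_nonneg hA0 hbrpos
  obtain ⟨T₂, hT₂⟩ := eventually_atTop.1 (hVtend.eventually (eventually_iff.2 (Iio_mem_nhds (hV T₁).1)))
  have hfin1 : V (max T₁ T₂) < V T₁ := hT₂ _ (le_max_right _ _)
  have hfin2 : V T₁ ≤ V (max T₁ T₂) := hVmono _ (le_max_left _ _)
  linarith
end

section
/- Fix l > −1 and set k = 3 + 2l + 1/2 if l ≥ −3/4 and k = 2 if −1 < l < −3/4. Let σ ∈ (0, 1/(3+2l)) and σ' be real numbers with σ' ≥ 1/(2(3+2l)) + k·σ. Then for all real u > 0 and v > 0 with 2u + v = 2(3+2l), setting h = (1+σu)v, one has 2u·[3+2l − u − (1+σ−σ')h] + v·[(u−1)(1+2σv) + σ'h] ≥ 0. -/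
/-- With `k = 3+2l+1/2` if `l ≥ -3/4`, `k = 2` if `-1 < l < -3/4`:
for `σ ∈ (0,1/(3+2l))` and `σ' ≥ 1/(2(3+2l)) + kσ`, and all `u, v > 0` with
`2u + v = 2(3+2l)`, setting `h = (1+σu)v`, the derivative of `P = 2u + v - 2(3+2l)`
along the homology-invariant vector field is non-negative:
`2u[3+2l - u - (1+σ-σ')h] + v[(u-1)(1+2σv) + σ'h] ≥ 0`. -/
theorem stmt8
    (l : ℝ) (hl : -1 < l)
    (k : ℝ) (hk : k = if -(3/4) ≤ l then 3 + 2 * l + 1 / 2 else 2)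
    (σ σ' : ℝ) (hσpos : 0 < σ) (hσlt : σ < 1 / (3 + 2 * l))
    (hσ' : 1 / (2 * (3 + 2 * l)) + k * σ ≤ σ')
    (u v : ℝ) (hu : 0 < u) (hv : 0 < v)
    (huv : 2 * u + v = 2 * (3 + 2 * l)) :
    0 ≤ 2 * u * (3 + 2 * l - u - (1 + σ - σ') * ((1 + σ * u) * v)) +
        v * ((u - 1) * (1 + 2 * σ * v) + σ' * ((1 + σ * u) * v)) := by
  have hA : (1:ℝ) < 3 + 2 * l := by linarith
  have h2A : (0:ℝ) < 2 * (3 + 2 * l) := by linarith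
  have hv2 : v = 2 * (3 + 2 * l) - 2 * u := by linarith
  subst hv2
  have huA : u < 3 + 2 * l := by linarith
  -- D ≥ 0
  have hone : 2 * (3 + 2 * l) * (1 / (2 * (3 + 2 * l))) = 1 := by
    field_simp
  have hmul := mul_le_mul_of_nonneg_left hσ' h2A.le
  have hD : 0 ≤ 2 * (3 + 2 * l) * σ' - 1 - 2 * (3 + 2 * l) * k * σ := by
    nlinarith [hmul, hone]
  -- G ≥ 0
  have hG : 0 ≤ -6 * u ^ 2 + (3 + 4 * (3 + 2 * l)) * u - 4 * (3 + 2 * l)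
      + 2 * (3 + 2 * l) * k + 2 * σ * u * ((3 + 2 * l) * k - u) := by
    by_cases hc : -(3/4:ℝ) ≤ l
    · rw [if_pos hc] at hk
      subst hk
      have hA3 : (3:ℝ)/2 ≤ 3 + 2 * l := by linarith
      have h1 : 0 ≤ (3 + 2 * l - u) * (6 * u - 3 + 2 * (3 + 2 * l)) :=
        mul_nonneg (by linarith) (by linarith)
      have h2 : 0 ≤ 2 * σ * u * ((3 + 2 * l) * (3 + 2 * l + 1/2) - u) := by
        have h3 : u < (3 + 2 * l) * (3 + 2 * l + 1/2) := by nlinarith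
        have h4 : (0:ℝ) ≤ 2 * σ * u := by positivity
        exact mul_nonneg h4 (by linarith)
      nlinarith [h1, h2]
    · rw [if_neg hc] at hk
      subst hk
      have hA3 : 3 + 2 * l < (3:ℝ)/2 := by linarith
      have h1 : 0 ≤ u * (3 + 4 * (3 + 2 * l) - 6 * u) :=
        mul_nonneg hu.le (by linarith)
      have h2 : 0 ≤ 2 * σ * u * ((3 + 2 * l) * 2 - u) := by
        have h4 : (0:ℝ) ≤ 2 * σ * u := by positivity
        exact mul_nonneg h4 (by linarith)
      nlinarith [h1, h2]
  -- combine via the algebraic identity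
  have hvpos : (0:ℝ) < 2 * (3 + 2 * l) - 2 * u := by linarith
  have hσu : (0:ℝ) < 1 + σ * u := by positivity
  nlinarith [mul_nonneg (mul_nonneg hvpos.le hσpos.le) hG,
    mul_nonneg (mul_nonneg hD hσu.le) hvpos.le]
end

section
/- Fix l > −1 and real numbers σ ∈ (0, 1/(3+2l)) and σ'. For (U,V) ∈ (0,1)² define D(U,V) := [2(2+l)σ' − 1 − (7+4l)σ]·[V(1−U) + σUV] + U·[2(1+l)(1−V) + 2(3+2l)Vσ(1+σ)]. Then D(U,V) > 0 for all (U,V) ∈ (0,1)² if and only if σ' ≥ 1/(4+2l) + ((7+4l)/(4+2l))·σ. Moreover, along any C¹ solution of the system dU/dλ = U(1−U)[(3+2l−(4+2l)U)(1−V) − (1+σ−σ')H], dV/dλ = V(1−V)[(2U−1)(1−V+2σV) + σ'H], H = (1−U+σU)V (with these fixed values of σ, σ'), the function Z = [U/(1−U)]·[V/(1−V)]^{3+2l} satisfies Z^{−1}·dZ/dλ = D(U,V) at every point where (U,V) ∈ (0,1)². -/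
open Set Filter Topology

/-!
Write `A = 2(2+l)σ' - 1 - (7+4l)σ`, so that the threshold condition on `σ'` is `0 ≤ A`, and
`D(U,V) = A·V·(1 - U + σU) + U·P(V)` with `P(V) = 2(1+l)(1-V) + 2(3+2l)Vσ(1+σ) > 0`.
If `A ≥ 0` both summands are nonnegative and the second is positive. Conversely `D(U,1/2)` is affine
in `U` with value `A/2` at `U = 0`, so positivity on `(0,1)` forces `A ≥ 0`.

For the derivative, the odds ratio `x/(1-x)` turns the logistic form `x' = x(1-x)·a` of both
equations into `(x/(1-x))' = (x/(1-x))·a`, so `Z'/Z` is the first bracket plus `3+2l` times the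
second, which is `D` by a polynomial identity.
-/

def logDerivZ (l σ σ' U V : ℝ) : ℝ :=
  (2 * (2 + l) * σ' - 1 - (7 + 4 * l) * σ) * (V * (1 - U) + σ * U * V) +
    U * (2 * (1 + l) * (1 - V) + 2 * (3 + 2 * l) * V * σ * (1 + σ))

theorem nonneg_of_forall_mem_Ioo_pos_add_mul {a b : ℝ} (h : ∀ u ∈ Ioo (0 : ℝ) 1, 0 < a + b * u) :
    0 ≤ a := by
  have hlim : Tendsto (fun u => a + b * u) (𝓝[>] 0) (𝓝 a) := by
    have : Continuous fun u => a + b * u := by fun_prop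
    exact (this.tendsto' 0 a (by simp)).mono_left nhdsWithin_le_nhds
  refine ge_of_tendsto hlim ?_
  filter_upwards [Ioo_mem_nhdsGT one_pos] with u hu using (h u hu).le

section Positivity

variable {l σ σ' : ℝ}

theorem threshold_le_iff (hl : -1 < l) :
    1 / (4 + 2 * l) + (7 + 4 * l) / (4 + 2 * l) * σ ≤ σ' ↔
      0 ≤ 2 * (2 + l) * σ' - 1 - (7 + 4 * l) * σ := by
  have h : 0 < 4 + 2 * l := by linarith
  rw [div_mul_eq_mul_div, ← add_div, div_le_iff₀ h]
  constructor <;> intro <;> linarith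

theorem logDerivZ_pos (hl : -1 < l) (hσ : 0 < σ)
    (hA : 0 ≤ 2 * (2 + l) * σ' - 1 - (7 + 4 * l) * σ) {U V : ℝ}
    (hU : U ∈ Ioo (0 : ℝ) 1) (hV : V ∈ Ioo (0 : ℝ) 1) : 0 < logDerivZ l σ σ' U V := by
  obtain ⟨hU0, hU1⟩ := hU
  obtain ⟨hV0, hV1⟩ := hV
  have hfirst : 0 ≤ V * (1 - U) + σ * U * V := by
    have := mul_pos hV0 (sub_pos.2 hU1)
    have := mul_pos (mul_pos hσ hU0) hV0
    linarith
  have hP : 0 < 2 * (1 + l) * (1 - V) + 2 * (3 + 2 * l) * V * σ * (1 + σ) := by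
    have := mul_pos (by linarith : (0 : ℝ) < 2 * (1 + l)) (sub_pos.2 hV1)
    have := mul_pos (mul_pos (mul_pos (by linarith : (0 : ℝ) < 2 * (3 + 2 * l)) hV0) hσ)
      (by linarith : (0 : ℝ) < 1 + σ)
    linarith
  exact add_pos_of_nonneg_of_pos (mul_nonneg hA hfirst) (mul_pos hU0 hP)

theorem coeff_nonneg_of_forall_logDerivZ_pos
    (h : ∀ U V : ℝ, U ∈ Ioo (0 : ℝ) 1 → V ∈ Ioo (0 : ℝ) 1 → 0 < logDerivZ l σ σ' U V) :
    0 ≤ 2 * (2 + l) * σ' - 1 - (7 + 4 * l) * σ := by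
  set A := 2 * (2 + l) * σ' - 1 - (7 + 4 * l) * σ
  have hD : ∀ U, logDerivZ l σ σ' U (1 / 2) =
      A / 2 + (A * (σ - 1) / 2 + (1 + l) + (3 + 2 * l) * σ * (1 + σ)) * U := by
    intro U
    simp only [logDerivZ, A]
    ring
  have := nonneg_of_forall_mem_Ioo_pos_add_mul fun U hU =>
    hD U ▸ h U (1 / 2) hU ⟨by norm_num, by norm_num⟩
  linarith

end Positivity

theorem HasDerivAt.div_one_sub {u : ℝ → ℝ} {a t : ℝ} (hu : HasDerivAt u (u t * (1 - u t) * a) t)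
    (ht : u t ≠ 1) : HasDerivAt (fun s => u s / (1 - u s)) (u t / (1 - u t) * a) t := by
  have h1 : 1 - u t ≠ 0 := sub_ne_zero.2 ht.symm
  refine (hu.div (hu.const_sub 1) h1).congr_deriv ?_
  field_simp
  ring

theorem HasDerivAt.div_one_sub_rpow {u : ℝ → ℝ} {a t : ℝ} (p : ℝ)
    (hu : HasDerivAt u (u t * (1 - u t) * a) t) (ht : u t ∈ Ioo (0 : ℝ) 1) :
    HasDerivAt (fun s => (u s / (1 - u s)) ^ p) ((u t / (1 - u t)) ^ p * (p * a)) t := by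
  have hpos : 0 < u t / (1 - u t) := div_pos ht.1 (sub_pos.2 ht.2)
  refine ((hu.div_one_sub ht.2.ne).rpow_const (Or.inl hpos.ne')).congr_deriv ?_
  rw [Real.rpow_sub_one hpos.ne']
  have := ht.1.ne'
  have := (sub_pos.2 ht.2).ne'
  field_simp

theorem logDerivZ_eq_add_mul (l σ σ' U V : ℝ) :
    logDerivZ l σ σ' U V =
      ((3 + 2 * l - (4 + 2 * l) * U) * (1 - V) - (1 + σ - σ') * ((1 - U + σ * U) * V)) +
        (3 + 2 * l) * ((2 * U - 1) * (1 - V + 2 * σ * V) + σ' * ((1 - U + σ * U) * V)) := by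
  unfold logDerivZ
  ring

theorem stmt9_general
    (l : ℝ) (hl : -1 < l)
    (σ σ' : ℝ) (hσpos : 0 < σ) :
    ((∀ U V : ℝ, U ∈ Ioo (0:ℝ) 1 → V ∈ Ioo (0:ℝ) 1 →
        0 < (2 * (2 + l) * σ' - 1 - (7 + 4 * l) * σ) * (V * (1 - U) + σ * U * V) +
            U * (2 * (1 + l) * (1 - V) + 2 * (3 + 2 * l) * V * σ * (1 + σ)))
      ↔ 1 / (4 + 2 * l) + (7 + 4 * l) / (4 + 2 * l) * σ ≤ σ') ∧
    (∀ U V : ℝ → ℝ,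
      (∀ t : ℝ, HasDerivAt U
        (U t * (1 - U t) * ((3 + 2 * l - (4 + 2 * l) * U t) * (1 - V t)
          - (1 + σ - σ') * ((1 - U t + σ * U t) * V t))) t) →
      (∀ t : ℝ, HasDerivAt V
        (V t * (1 - V t) * ((2 * U t - 1) * (1 - V t + 2 * σ * V t)
          + σ' * ((1 - U t + σ * U t) * V t))) t) →
      ∀ t : ℝ, U t ∈ Ioo (0:ℝ) 1 → V t ∈ Ioo (0:ℝ) 1 →
        HasDerivAt (fun s => (U s / (1 - U s)) * (V s / (1 - V s)) ^ (3 + 2 * l))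
          ((U t / (1 - U t)) * (V t / (1 - V t)) ^ (3 + 2 * l) *
            ((2 * (2 + l) * σ' - 1 - (7 + 4 * l) * σ) * (V t * (1 - U t) + σ * U t * V t) +
              U t * (2 * (1 + l) * (1 - V t) + 2 * (3 + 2 * l) * V t * σ * (1 + σ)))) t) := by
  refine ⟨⟨fun h => ?_, fun h U V hU hV => ?_⟩, fun U V hU hV t hUt hVt => ?_⟩
  · exact (threshold_le_iff hl).2 (coeff_nonneg_of_forall_logDerivZ_pos h)
  · exact logDerivZ_pos hl hσpos ((threshold_le_iff hl).1 h) hU hV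
  · have hZ := ((hU t).div_one_sub hUt.2.ne).mul ((hV t).div_one_sub_rpow (3 + 2 * l) hVt)
    refine hZ.congr_deriv ?_
    rw [← logDerivZ, logDerivZ_eq_add_mul]
    ring

/-- For fixed `l > -1`, `σ ∈ (0,1/(3+2l))` and `σ'`, define
`D(U,V) = [2(2+l)σ' - 1 - (7+4l)σ][V(1-U) + σUV] + U[2(1+l)(1-V) + 2(3+2l)Vσ(1+σ)]`.
Then `D > 0` on `(0,1)²` iff `σ' ≥ 1/(4+2l) + ((7+4l)/(4+2l))σ`; moreover along any
`C¹` solution of the compactified system, `Z = [U/(1-U)][V/(1-V)]^{3+2l}` satisfies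
`dZ/dλ = Z · D(U,V)` wherever `(U,V) ∈ (0,1)²`. -/
theorem stmt9
    (l : ℝ) (hl : -1 < l)
    (σ σ' : ℝ) (hσpos : 0 < σ) (hσlt : σ < 1 / (3 + 2 * l)) :
    ((∀ U V : ℝ, U ∈ Ioo (0:ℝ) 1 → V ∈ Ioo (0:ℝ) 1 →
        0 < (2 * (2 + l) * σ' - 1 - (7 + 4 * l) * σ) * (V * (1 - U) + σ * U * V) +
            U * (2 * (1 + l) * (1 - V) + 2 * (3 + 2 * l) * V * σ * (1 + σ)))
      ↔ 1 / (4 + 2 * l) + (7 + 4 * l) / (4 + 2 * l) * σ ≤ σ') ∧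
    (∀ U V : ℝ → ℝ,
      (∀ t : ℝ, HasDerivAt U
        (U t * (1 - U t) * ((3 + 2 * l - (4 + 2 * l) * U t) * (1 - V t)
          - (1 + σ - σ') * ((1 - U t + σ * U t) * V t))) t) →
      (∀ t : ℝ, HasDerivAt V
        (V t * (1 - V t) * ((2 * U t - 1) * (1 - V t + 2 * σ * V t)
          + σ' * ((1 - U t + σ * U t) * V t))) t) →
      ∀ t : ℝ, U t ∈ Ioo (0:ℝ) 1 → V t ∈ Ioo (0:ℝ) 1 →
        HasDerivAt (fun s => (U s / (1 - U s)) * (V s / (1 - V s)) ^ (3 + 2 * l))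
          ((U t / (1 - U t)) * (V t / (1 - V t)) ^ (3 + 2 * l) *
            ((2 * (2 + l) * σ' - 1 - (7 + 4 * l) * σ) * (V t * (1 - U t) + σ * U t * V t) +
              U t * (2 * (1 + l) * (1 - V t) + 2 * (3 + 2 * l) * V t * σ * (1 + σ)))) t) :=
  stmt9_general l hl σ σ' hσpos
end

section
/- Let γ(λ) = (U(λ),V(λ),Ω(λ)) be an interior orbit of the Einstein–Vlasov dynamical system with Ω(λ) → 0 and V(λ) → 1 as λ → +∞, and suppose there exist c > 0 and η* > 0 with σ'(η) ≥ c for all 0 < η ≤ η*. Then ∫_{λ₀}^{∞} (1−U(λ))(1−V(λ)) dλ < ∞ for any λ₀; consequently r(λ) := r₀·exp[∫_{λ₀}^{λ} (1−U(λ'))(1−V(λ')) dλ'] converges to a finite limit R < ∞ as λ → +∞, i.e., the corresponding solution of the Einstein–Vlasov equations has finite radius and finite mass. -/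
open Filter Set

set_option maxHeartbeats 1000000 in
lemma keyIneq {c Fhi u v σ₀ σ₁ Ft : ℝ} (hc : 0 < c) (hFhi : 0 < Fhi)
    (hu0 : 0 < u) (hu1 : u < 1) (hv1 : v < 1)
    (hv : 1 - min (1/2) (c/16) ≤ v)
    (hσ0 : 0 < σ₀) (hσε : σ₀ < c/32) (hσ₁ : c ≤ σ₁)
    (hFt : Ft ≤ Fhi) :
    c/(4*Fhi) * (Ft * ((1 - u + σ₀ * u) * v)) ≤
      v * ((2 * u - 1) * (1 - v + 2 * σ₀ * v) + σ₁ * ((1 - u + σ₀ * u) * v)) := by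
  have hδ1 : min (1/2) (c/16) ≤ (1/2 : ℝ) := min_le_left _ _
  have hδ2 : min (1/2) (c/16) ≤ c/16 := min_le_right _ _
  have hv2 : (1/2 : ℝ) ≤ v := by linarith
  have hW : 1 - v ≤ c/16 := by linarith
  have hW0 : 0 < 1 - v := by linarith
  have hq0 : 0 < 1 - v + 2 * σ₀ * v := by nlinarith
  have hhb : 0 < 1 - u + σ₀ * u := by nlinarith
  have hh0 : 0 < (1 - u + σ₀ * u) * v := mul_pos hhb (by linarith)
  have hρ0 : 0 < c / (4 * Fhi) := by positivity
  have hρFt : c/(4*Fhi) * Ft ≤ c/4 := by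
    have h1 : c/(4*Fhi) * Ft ≤ c/(4*Fhi) * Fhi := mul_le_mul_of_nonneg_left hFt hρ0.le
    have h2 : c/(4*Fhi) * Fhi = c/4 := by field_simp
    linarith
  have hB : c * ((1 - u + σ₀ * u) * v) ≤ σ₁ * ((1 - u + σ₀ * u) * v) :=
    mul_le_mul_of_nonneg_right hσ₁ hh0.le
  have hmain : c/4 * ((1 - u + σ₀ * u) * v) ≤
      v * ((2 * u - 1) * (1 - v + 2 * σ₀ * v) + σ₁ * ((1 - u + σ₀ * u) * v)) := by
    have hBge : c/2 * ((1 - u + σ₀ * u) * v) ≤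
        (2 * u - 1) * (1 - v + 2 * σ₀ * v) + σ₁ * ((1 - u + σ₀ * u) * v) := by
      rcases le_or_gt (1/2 : ℝ) u with hu | hu
      · have ht0 : 0 ≤ (2 * u - 1) * (1 - v + 2 * σ₀ * v) :=
          mul_nonneg (by linarith) hq0.le
        nlinarith
      · have hhq : (1/4 : ℝ) ≤ (1 - u + σ₀ * u) * v := by nlinarith
        have hq2 : 1 - v + 2 * σ₀ * v ≤ c/8 := by nlinarith
        have hneg : -(c/8) ≤ (2 * u - 1) * (1 - v + 2 * σ₀ * v) := by nlinarith
        have hc8 : c/8 ≤ c/2 * ((1 - u + σ₀ * u) * v) := by nlinarith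
        linarith
    have hB0 : 0 ≤ (2 * u - 1) * (1 - v + 2 * σ₀ * v) + σ₁ * ((1 - u + σ₀ * u) * v) :=
      le_trans (le_of_lt (mul_pos (by linarith : (0:ℝ) < c/2) hh0)) hBge
    have h12 : 1/2 * ((2 * u - 1) * (1 - v + 2 * σ₀ * v) + σ₁ * ((1 - u + σ₀ * u) * v)) ≤
        v * ((2 * u - 1) * (1 - v + 2 * σ₀ * v) + σ₁ * ((1 - u + σ₀ * u) * v)) :=
      mul_le_mul_of_nonneg_right hv2 hB0
    linarith
  have hexp : c/(4*Fhi) * (Ft * ((1 - u + σ₀ * u) * v)) ≤ c/4 * ((1 - u + σ₀ * u) * v) := by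
    rw [← mul_assoc]
    exact mul_le_mul_of_nonneg_right hρFt hh0.le
  linarith


set_option maxHeartbeats 1000000 in
/-- If an interior orbit satisfies `Ω → 0` and `V → 1` as `λ → +∞`, and `σ' ≥ c > 0` near `η = 0`, then `∫_{λ₀}^∞ (1-U)(1-V) dλ < ∞` and `r(λ) = r₀ exp ∫_{λ₀}^λ (1-U)(1-V)` converges to a finite radius `R` as `λ → +∞`. -/
theorem stmt10
    (l : ℝ) (hl : -1 < l)
    (σ σ' : ℝ → ℝ)
    (hσderiv : ∀ η : ℝ, 0 < η → HasDerivAt σ (σ' η) η)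
    (hσ'cont : ContinuousOn σ' (Ioi 0))
    (hσrange : ∀ η : ℝ, 0 < η → σ η ∈ Ioo 0 (1 / (3 + 2 * l)))
    (hσ0 : Tendsto σ (nhdsWithin 0 (Ioi 0)) (nhds 0))
    (k₁ k₂ : ℝ) (hk₁ : 0 < k₁) (hk₁₂ : k₁ < k₂)
    (hσ'near : ∃ η₀ > (0:ℝ), ∀ η ∈ Ioo (0:ℝ) η₀, σ' η ∈ Ioo k₁ k₂)
    (ω ω' : ℝ → ℝ)
    (hωsmooth : ContDiffOn ℝ (⊤ : ℕ∞) ω (Ioi 0))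
    (hωderiv : ∀ η : ℝ, 0 < η → HasDerivAt ω (ω' η) η)
    (hωpos : ∀ η : ℝ, 0 < η → 0 < ω η)
    (hωmono : StrictMonoOn ω (Ioi 0))
    (hω0 : Tendsto ω (nhdsWithin 0 (Ioi 0)) (nhds 0))
    (F : ℝ → ℝ) (hFdef : ∀ η : ℝ, 0 < η → F η = σ η * (ω' η / ω η))
    (Flo Fhi : ℝ) (hFlo : 0 < Flo)
    (hFbounds : ∀ η : ℝ, 0 < η → F η ∈ Icc Flo Fhi)
    (U V E Ω : ℝ → ℝ)
    (hΩdef : ∀ t : ℝ, Ω t = ω (E t) / (1 + ω (E t)))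
    (hU : ∀ t : ℝ, U t ∈ Ioo (0:ℝ) 1) (hV : ∀ t : ℝ, V t ∈ Ioo (0:ℝ) 1)
    (hE : ∀ t : ℝ, 0 < E t) (hEcont : Continuous E)
    (hUode : ∀ t : ℝ, HasDerivAt U
      (U t * (1 - U t) * ((3 + 2 * l - (4 + 2 * l) * U t) * (1 - V t)
        - (1 + σ (E t) - σ' (E t)) * ((1 - U t + σ (E t) * U t) * V t))) t)
    (hVode : ∀ t : ℝ, HasDerivAt V
      (V t * (1 - V t) * ((2 * U t - 1) * (1 - V t + 2 * σ (E t) * V t)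
        + σ' (E t) * ((1 - U t + σ (E t) * U t) * V t))) t)
    (hΩode : ∀ t : ℝ, HasDerivAt Ω
      (-(Ω t * (1 - Ω t) * F (E t) * ((1 - U t + σ (E t) * U t) * V t))) t)
    (c ηstar : ℝ) (hc : 0 < c) (hηstar : 0 < ηstar)
    (hσ'c : ∀ η : ℝ, 0 < η → η ≤ ηstar → c ≤ σ' η)
    (hΩlim : Tendsto Ω atTop (nhds 0)) (hVlim : Tendsto V atTop (nhds 1)) :
    ∀ t₀ : ℝ,
      MeasureTheory.IntegrableOn (fun t => (1 - U t) * (1 - V t)) (Ioi t₀)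
        MeasureTheory.volume ∧
      ∀ r₀ : ℝ, 0 < r₀ → ∃ R : ℝ,
        Tendsto (fun t => r₀ * Real.exp (∫ s in t₀..t, (1 - U s) * (1 - V s)))
          atTop (nhds R) := by
  have hFhi0 : 0 < Fhi :=
    lt_of_lt_of_le hFlo ((hFbounds (E 0) (hE 0)).1.trans (hFbounds (E 0) (hE 0)).2)
  have hΩmem : ∀ t, 0 < Ω t ∧ Ω t < 1 := by
    intro t
    have hw : 0 < ω (E t) := hωpos _ (hE t)
    have h1w : 0 < 1 + ω (E t) := by linarith
    rw [hΩdef t]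
    exact ⟨div_pos hw h1w, by rw [div_lt_one h1w]; linarith⟩
  -- continuity facts
  have hUcont : Continuous U :=
    continuous_iff_continuousAt.2 fun t => (hUode t).differentiableAt.continuousAt
  have hVcont : Continuous V :=
    continuous_iff_continuousAt.2 fun t => (hVode t).differentiableAt.continuousAt
  have hΩcont : Continuous Ω :=
    continuous_iff_continuousAt.2 fun t => (hΩode t).differentiableAt.continuousAt
  have hσcontOn : ContinuousOn σ (Ioi 0) :=
    fun η hη => ((hσderiv η hη).differentiableAt.continuousAt).continuousWithinAt
  have hσEcont : Continuous fun t => σ (E t) :=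
    hσcontOn.comp_continuous hEcont fun t => mem_Ioi.mpr (hE t)
  have hωcontOn : ContinuousOn ω (Ioi 0) :=
    fun η hη => ((hωderiv η hη).differentiableAt.continuousAt).continuousWithinAt
  have hω'contOn : ContinuousOn ω' (Ioi 0) :=
    (hωsmooth.continuousOn_deriv_of_isOpen isOpen_Ioi (by simp)).congr
      fun η hη => ((hωderiv η hη).deriv).symm
  have hFcontOn : ContinuousOn F (Ioi 0) :=
    ((hσcontOn.mul (hω'contOn.div hωcontOn fun η hη => ne_of_gt (hωpos η hη)))).congr
      fun η hη => hFdef η hη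
  have hFEcont : Continuous fun t => F (E t) :=
    hFcontOn.comp_continuous hEcont fun t => mem_Ioi.mpr (hE t)
  have hscont : Continuous fun t => Real.log (1 - Ω t) - Real.log (Ω t) :=
    ((continuous_const.sub hΩcont).log fun t =>
        ne_of_gt (by linarith [(hΩmem t).2] : (0:ℝ) < 1 - Ω t)).sub
      (hΩcont.log fun t => ne_of_gt (hΩmem t).1)
  have hfcont : Continuous fun t => (1 - U t) * (1 - V t) :=
    (continuous_const.sub hUcont).mul (continuous_const.sub hVcont)
  have hHcont : Continuous fun t => (1 - U t + σ (E t) * U t) * V t :=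
    ((continuous_const.sub hUcont).add (hσEcont.mul hUcont)).mul hVcont
  have hHpos : ∀ t, 0 < (1 - U t + σ (E t) * U t) * V t := fun t =>
    mul_pos (by nlinarith [(hU t).1, (hU t).2, (hσrange (E t) (hE t)).1]) (hV t).1
  -- derivative of s = log(1-Ω) - log(Ω)
  have hsder : ∀ t : ℝ, HasDerivAt (fun u => Real.log (1 - Ω u) - Real.log (Ω u))
      (F (E t) * ((1 - U t + σ (E t) * U t) * V t)) t := by
    intro t
    have hΩ0 := (hΩmem t).1
    have hΩ1 : 0 < 1 - Ω t := by linarith [(hΩmem t).2]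
    have h1 : HasDerivAt (fun u => (1:ℝ) - Ω u)
        (0 - (-(Ω t * (1 - Ω t) * F (E t) * ((1 - U t + σ (E t) * U t) * V t)))) t :=
      (hasDerivAt_const t 1).sub (hΩode t)
    have h2 := h1.log (ne_of_gt hΩ1)
    have h3 := (hΩode t).log (ne_of_gt hΩ0)
    have h4 := h2.sub h3
    refine h4.congr_deriv ?_
    field_simp
    ring
  -- pick lam1 so that for t ≥ lam1 all good conditions hold
  obtain ⟨η₂, hη₂pos, hη₂⟩ : ∃ η₂ > (0:ℝ), ∀ η, 0 < η → η < η₂ → σ η < c/32 := by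
    have hev : ∀ᶠ η in nhdsWithin 0 (Ioi 0), σ η < c/32 :=
      hσ0.eventually (eventually_lt_nhds (by positivity))
    rw [eventually_nhdsWithin_iff, Metric.eventually_nhds_iff] at hev
    obtain ⟨r, hr0, hr⟩ := hev
    exact ⟨r, hr0, fun η hη1 hη2' =>
      hr (by rw [Real.dist_eq, sub_zero, abs_of_pos hη1]; exact hη2') (mem_Ioi.mpr hη1)⟩
  have hηokpos : 0 < min η₂ ηstar := lt_min hη₂pos hηstar
  have hωE : ∀ t, ω (E t) = Ω t / (1 - Ω t) := by
    intro t
    have hw : 0 < ω (E t) := hωpos _ (hE t)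
    have h1w : (0:ℝ) < 1 + ω (E t) := by linarith
    rw [hΩdef t]
    field_simp
    ring
  have hωEtend : Tendsto (fun t => ω (E t)) atTop (nhds 0) := by
    have h1 : Tendsto (fun t => Ω t / (1 - Ω t)) atTop (nhds (0 / (1 - 0))) :=
      hΩlim.div (tendsto_const_nhds.sub hΩlim) (by norm_num)
    rw [funext hωE]
    simpa using h1
  have hev : ∀ᶠ t in atTop,
      (1 - min (1/2 : ℝ) (c/16) < V t ∧ ω (E t) < ω (min η₂ ηstar)) :=
    (hVlim.eventually (eventually_gt_nhds (by
      have h := lt_min (by norm_num : (0:ℝ) < 1/2) (by positivity : (0:ℝ) < c/16)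
      linarith : 1 - min (1/2:ℝ) (c/16) < 1))).and
      (hωEtend.eventually (eventually_lt_nhds (hωpos _ hηokpos)))
  obtain ⟨lam1, hlam1⟩ := eventually_atTop.1 hev
  have hgood : ∀ x, lam1 ≤ x →
      (1 - min (1/2:ℝ) (c/16) ≤ V x ∧ σ (E x) < c/32 ∧ c ≤ σ' (E x)) := by
    intro x hx
    obtain ⟨hVx, hωx⟩ := hlam1 x hx
    have hEx : E x < min η₂ ηstar := by
      by_contra hcon
      push_neg at hcon
      have := hωmono.monotoneOn (mem_Ioi.mpr hηokpos) (mem_Ioi.mpr (hE x)) hcon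
      linarith
    exact ⟨hVx.le, hη₂ _ (hE x) (lt_of_lt_of_le hEx (min_le_left _ _)),
      hσ'c _ (hE x) (le_of_lt (lt_of_lt_of_le hEx (min_le_right _ _)))⟩
  intro t₀
  set lam2 := max lam1 t₀ with hlam2def
  have hlam2₁ : lam1 ≤ lam2 := le_max_left _ _
  have ht₀₂ : t₀ ≤ lam2 := le_max_right _ _
  -- derivative of φ = log(1-V) + ρ s
  have hφder : ∀ t : ℝ, HasDerivAt
      (fun u => Real.log (1 - V u) + c/(4*Fhi) * (Real.log (1 - Ω u) - Real.log (Ω u)))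
      (-(V t * ((2 * U t - 1) * (1 - V t + 2 * σ (E t) * V t)
          + σ' (E t) * ((1 - U t + σ (E t) * U t) * V t)))
        + c/(4*Fhi) * (F (E t) * ((1 - U t + σ (E t) * U t) * V t))) t := by
    intro t
    have hVt : (0:ℝ) < 1 - V t := by linarith [(hV t).2]
    have h1 : HasDerivAt (fun u => (1:ℝ) - V u)
        (0 - (V t * (1 - V t) * ((2 * U t - 1) * (1 - V t + 2 * σ (E t) * V t)
          + σ' (E t) * ((1 - U t + σ (E t) * U t) * V t)))) t :=
      (hasDerivAt_const t 1).sub (hVode t)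
    have h2 := h1.log (ne_of_gt hVt)
    have h4 := h2.add ((hsder t).const_mul (c/(4*Fhi)))
    refine h4.congr_deriv ?_
    field_simp
    ring
  have hφanti : AntitoneOn
      (fun u => Real.log (1 - V u) + c/(4*Fhi) * (Real.log (1 - Ω u) - Real.log (Ω u)))
      (Ici lam2) := by
    apply antitoneOn_of_deriv_nonpos (convex_Ici lam2)
    · exact fun x _ => (hφder x).differentiableAt.continuousAt.continuousWithinAt
    · exact fun x _ => (hφder x).differentiableAt.differentiableWithinAt
    · intro x hx
      rw [interior_Ici] at hx
      rw [(hφder x).deriv]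
      obtain ⟨hVx, hσx, hσ'x⟩ := hgood x (le_trans hlam2₁ (le_of_lt hx))
      have hkey := keyIneq hc hFhi0 (hU x).1 (hU x).2 (hV x).2 hVx
        ((hσrange (E x) (hE x)).1) hσx hσ'x (hFbounds (E x) (hE x)).2
      linarith
  -- bound on 1 - V t for t ≥ lam2
  have hVbd : ∀ t, lam2 ≤ t → 1 - V t ≤
      Real.exp ((Real.log (1 - V lam2)
          + c/(4*Fhi) * (Real.log (1 - Ω lam2) - Real.log (Ω lam2)))
        - c/(4*Fhi) * (Real.log (1 - Ω t) - Real.log (Ω t))) := by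
    intro t ht
    have h1 := hφanti (self_mem_Ici : lam2 ∈ Ici lam2) (mem_Ici.mpr ht) ht
    simp only [] at h1
    have h2 : (0:ℝ) < 1 - V t := by linarith [(hV t).2]
    calc 1 - V t = Real.exp (Real.log (1 - V t)) := (Real.exp_log h2).symm
      _ ≤ _ := Real.exp_le_exp.mpr (by linarith)
  -- pointwise domination for t ≥ lam2
  have hdom : ∀ t, lam2 ≤ t → (1 - U t) * (1 - V t) ≤
      2/Flo * (F (E t) * ((1 - U t + σ (E t) * U t) * V t)
        * Real.exp ((Real.log (1 - V lam2)
            + c/(4*Fhi) * (Real.log (1 - Ω lam2) - Real.log (Ω lam2)))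
          - c/(4*Fhi) * (Real.log (1 - Ω t) - Real.log (Ω t)))) := by
    intro t ht
    obtain ⟨hVx, -, -⟩ := hgood t (le_trans hlam2₁ ht)
    have hv2 : (1/2:ℝ) ≤ V t := by
      have h := min_le_left (1/2:ℝ) (c/16); linarith
    have hU1 : (0:ℝ) ≤ 1 - U t := by linarith [(hU t).2]
    have hFt : Flo ≤ F (E t) := (hFbounds (E t) (hE t)).1
    have hσU : (0:ℝ) ≤ σ (E t) * U t :=
      mul_nonneg (hσrange (E t) (hE t)).1.le (hU t).1.le
    have hFH : Flo * ((1 - U t) * V t)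
        ≤ F (E t) * ((1 - U t + σ (E t) * U t) * V t) := by
      apply mul_le_mul hFt
        (mul_le_mul_of_nonneg_right (by linarith) (hV t).1.le)
        (mul_nonneg hU1 (hV t).1.le)
        (le_trans hFlo.le hFt)
    have hchain : Flo * (1 - U t)
        ≤ 2 * (F (E t) * ((1 - U t + σ (E t) * U t) * V t)) := by
      nlinarith [mul_nonneg (mul_nonneg hFlo.le hU1) (by linarith : (0:ℝ) ≤ V t - 1/2)]
    have hexp := hVbd t ht
    have h1 : (1 - U t) * (1 - V t) ≤ (1 - U t) * Real.exp ((Real.log (1 - V lam2)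
            + c/(4*Fhi) * (Real.log (1 - Ω lam2) - Real.log (Ω lam2)))
          - c/(4*Fhi) * (Real.log (1 - Ω t) - Real.log (Ω t))) :=
      mul_le_mul_of_nonneg_left hexp hU1
    have h1' := mul_le_mul_of_nonneg_left h1 hFlo.le
    have h2' := mul_le_mul_of_nonneg_right hchain
      (Real.exp_nonneg ((Real.log (1 - V lam2)
            + c/(4*Fhi) * (Real.log (1 - Ω lam2) - Real.log (Ω lam2)))
          - c/(4*Fhi) * (Real.log (1 - Ω t) - Real.log (Ω t))))
    rw [div_mul_eq_mul_div, le_div_iff₀ hFlo]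
    nlinarith [h1', h2']
  -- antiderivative of the dominating function (up to the 2/Flo factor)
  have hAder : ∀ t : ℝ, HasDerivAt
      (fun u => -(4*Fhi/c) * Real.exp ((Real.log (1 - V lam2)
            + c/(4*Fhi) * (Real.log (1 - Ω lam2) - Real.log (Ω lam2)))
          - c/(4*Fhi) * (Real.log (1 - Ω u) - Real.log (Ω u))))
      (F (E t) * ((1 - U t + σ (E t) * U t) * V t)
        * Real.exp ((Real.log (1 - V lam2)
            + c/(4*Fhi) * (Real.log (1 - Ω lam2) - Real.log (Ω lam2)))
          - c/(4*Fhi) * (Real.log (1 - Ω t) - Real.log (Ω t)))) t := by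
    intro t
    have h1 : HasDerivAt (fun u => (Real.log (1 - V lam2)
            + c/(4*Fhi) * (Real.log (1 - Ω lam2) - Real.log (Ω lam2)))
          - c/(4*Fhi) * (Real.log (1 - Ω u) - Real.log (Ω u)))
        (0 - c/(4*Fhi) * (F (E t) * ((1 - U t + σ (E t) * U t) * V t))) t :=
      (hasDerivAt_const t _).sub ((hsder t).const_mul (c/(4*Fhi)))
    have h2 := h1.exp
    have h3 := h2.const_mul (-(4*Fhi/c))
    refine h3.congr_deriv ?_
    field_simp
    ring
  have hexpcont : Continuous fun t => Real.exp ((Real.log (1 - V lam2)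
            + c/(4*Fhi) * (Real.log (1 - Ω lam2) - Real.log (Ω lam2)))
          - c/(4*Fhi) * (Real.log (1 - Ω t) - Real.log (Ω t))) :=
    (continuous_const.sub (continuous_const.mul hscont)).rexp
  have hgbcont : Continuous fun t => 2/Flo * (F (E t) * ((1 - U t + σ (E t) * U t) * V t)
        * Real.exp ((Real.log (1 - V lam2)
            + c/(4*Fhi) * (Real.log (1 - Ω lam2) - Real.log (Ω lam2)))
          - c/(4*Fhi) * (Real.log (1 - Ω t) - Real.log (Ω t)))) :=
    continuous_const.mul ((hFEcont.mul hHcont).mul hexpcont)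
  -- integrability on Ioi lam2
  have hIoi : MeasureTheory.IntegrableOn (fun t => (1 - U t) * (1 - V t)) (Ioi lam2)
      MeasureTheory.volume := by
    have hfi : ∀ i : ℝ, MeasureTheory.IntegrableOn (fun t => (1 - U t) * (1 - V t))
        (Ioc lam2 i) MeasureTheory.volume := fun i => hfcont.integrableOn_Ioc
    apply MeasureTheory.integrableOn_Ioi_of_intervalIntegral_norm_bounded
      (2/Flo * ((4*Fhi/c) * Real.exp ((Real.log (1 - V lam2)
            + c/(4*Fhi) * (Real.log (1 - Ω lam2) - Real.log (Ω lam2)))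
          - c/(4*Fhi) * (Real.log (1 - Ω lam2) - Real.log (Ω lam2))))) lam2
      hfi (tendsto_id (α := ℝ))
    filter_upwards [eventually_ge_atTop lam2] with T hT
    show (∫ x in lam2..T, ‖(1 - U x) * (1 - V x)‖) ≤ _
    have heq : (∫ x in lam2..T, ‖(1 - U x) * (1 - V x)‖)
        = ∫ x in lam2..T, (1 - U x) * (1 - V x) :=
      intervalIntegral.integral_congr fun x _ => Real.norm_of_nonneg
        (mul_nonneg (by linarith [(hU x).2]) (by linarith [(hV x).2]))
    rw [heq]
    have hmono := intervalIntegral.integral_mono_on (μ := MeasureTheory.volume) hT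
      (hfcont.intervalIntegrable _ _) (hgbcont.intervalIntegrable _ _)
      (fun x hx => hdom x hx.1)
    rw [intervalIntegral.integral_const_mul] at hmono
    have hftc : (∫ x in lam2..T, F (E x) * ((1 - U x + σ (E x) * U x) * V x)
        * Real.exp ((Real.log (1 - V lam2)
            + c/(4*Fhi) * (Real.log (1 - Ω lam2) - Real.log (Ω lam2)))
          - c/(4*Fhi) * (Real.log (1 - Ω x) - Real.log (Ω x))))
        = (-(4*Fhi/c) * Real.exp ((Real.log (1 - V lam2)
            + c/(4*Fhi) * (Real.log (1 - Ω lam2) - Real.log (Ω lam2)))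
          - c/(4*Fhi) * (Real.log (1 - Ω T) - Real.log (Ω T))))
        - (-(4*Fhi/c) * Real.exp ((Real.log (1 - V lam2)
            + c/(4*Fhi) * (Real.log (1 - Ω lam2) - Real.log (Ω lam2)))
          - c/(4*Fhi) * (Real.log (1 - Ω lam2) - Real.log (Ω lam2)))) :=
      intervalIntegral.integral_eq_sub_of_hasDerivAt (fun x _ => hAder x)
        (((hFEcont.mul hHcont).mul hexpcont).intervalIntegrable _ _)
    rw [hftc] at hmono
    have hpos1 : (0:ℝ) < 4*Fhi/c := by positivity
    have hpos2 := Real.exp_pos ((Real.log (1 - V lam2)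
            + c/(4*Fhi) * (Real.log (1 - Ω lam2) - Real.log (Ω lam2)))
          - c/(4*Fhi) * (Real.log (1 - Ω T) - Real.log (Ω T)))
    have h2Flo : (0:ℝ) ≤ 2/Flo := by positivity
    calc (∫ x in lam2..T, (1 - U x) * (1 - V x)) ≤ _ := hmono
      _ ≤ 2/Flo * ((4*Fhi/c) * Real.exp ((Real.log (1 - V lam2)
            + c/(4*Fhi) * (Real.log (1 - Ω lam2) - Real.log (Ω lam2)))
          - c/(4*Fhi) * (Real.log (1 - Ω lam2) - Real.log (Ω lam2)))) := by
        apply mul_le_mul_of_nonneg_left _ h2Flo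
        nlinarith [mul_pos hpos1 hpos2]
  have hint : MeasureTheory.IntegrableOn (fun t => (1 - U t) * (1 - V t)) (Ioi t₀)
      MeasureTheory.volume := by
    apply MeasureTheory.IntegrableOn.mono_set
      (MeasureTheory.IntegrableOn.union (hfcont.integrableOn_Ioc (a := t₀) (b := lam2)) hIoi)
    intro x hx
    rcases le_or_gt x lam2 with h | h
    · exact Or.inl ⟨hx, h⟩
    · exact Or.inr h
  refine ⟨hint, ?_⟩
  intro r₀ hr₀
  refine ⟨r₀ * Real.exp (∫ x in Ioi t₀, (1 - U x) * (1 - V x)), ?_⟩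
  have h1 := MeasureTheory.intervalIntegral_tendsto_integral_Ioi t₀ hint tendsto_id
  have h2 := (Real.continuous_exp.continuousAt.tendsto.comp h1)
  exact h2.const_mul r₀
end
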